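/- arXiv:2401.15813 — 2 statements merged into one kernel-verified Lean document; each statement's English description precedes it below -/
import Mathlib

section
/- The Vecchia score function is unbiased: for a parametrized family of positive-definite covariance matrices K(θ) depending differentiably on a scalar parameter θ, define the Vecchia log-likelihood ℓ̂(y; θ) = Σ_{i=1}^n log p_θ(y_i | y_{g(i)}), where each conditional density is the Gaussian conditional of N(0, K(θ)) given the variables indexed by g(i) ⊆ {1,...,i-1}. Then E_θ[∂ℓ̂(y; θ)/∂θ] = 0, where the expectation is taken under y ~ N(0, K(θ)). -/
/-!
Each Vecchia factor is the log-density of `N(0, σ²(θ))` evaluated at the residual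
`u(θ) = a(θ) ⬝ᵥ y`, where `a(θ) = eᵢ - K_iS K_SS⁻¹` (extended by zero off `S`). Its θ-derivative is
`(u² - σ²) σ²' / (2σ⁴) - u u' / σ²`, so its mean vanishes as soon as `E u² = σ²` and `E u u' = 0`.
Both are second-moment identities under `Cov y = K`: the row `a K` vanishes on `S` (the residual
is uncorrelated with `y_S`) and equals `σ²` at `i`, while `a` is constant in θ off `S`, so `a'` is
supported on `S`. Linearity of the derivative and of the integral then sum the factors.
-/

open MeasureTheory Matrix Real

section MatrixCalculus

variable {𝕜 m : Type*} [NontriviallyNormedField 𝕜] [Fintype m] {x : 𝕜}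

theorem hasDerivAt_dotProduct_const {a : 𝕜 → m → 𝕜} {a' : m → 𝕜}
    (ha : ∀ k, HasDerivAt (fun θ => a θ k) (a' k) x) (z : m → 𝕜) :
    HasDerivAt (fun θ => a θ ⬝ᵥ z) (a' ⬝ᵥ z) x :=
  HasDerivAt.fun_sum fun k _ => (ha k).mul_const (z k)

variable [DecidableEq m] {A : 𝕜 → Matrix m m 𝕜}

theorem DifferentiableAt.matrix_det (hA : ∀ p q, DifferentiableAt 𝕜 (fun x => A x p q) x) :
    DifferentiableAt 𝕜 (fun x => (A x).det) x := by
  simp only [det_apply']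
  exact DifferentiableAt.fun_sum fun σ _ =>
    (DifferentiableAt.fun_finsetProd fun p _ => hA _ _).const_mul _

theorem DifferentiableAt.matrix_adjugate_apply
    (hA : ∀ p q, DifferentiableAt 𝕜 (fun x => A x p q) x) (p q : m) :
    DifferentiableAt 𝕜 (fun x => (A x).adjugate p q) x := by
  simp only [adjugate_apply]
  refine DifferentiableAt.matrix_det fun r s => ?_
  by_cases hr : r = q
  · simp only [hr, updateRow_self, differentiableAt_const]
  · simpa only [updateRow_ne hr] using hA r s

theorem DifferentiableAt.matrix_inv_apply
    (hA : ∀ p q, DifferentiableAt 𝕜 (fun x => A x p q) x) (hdet : (A x).det ≠ 0) (p q : m) :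
    DifferentiableAt 𝕜 (fun x => (A x)⁻¹ p q) x := by
  simp only [inv_def, Ring.inverse_eq_inv', Matrix.smul_apply, smul_eq_mul]
  exact ((matrix_det hA).inv hdet).mul (matrix_adjugate_apply hA p q)

end MatrixCalculus

theorem Matrix.PosDef.isUnit_det_submatrix {m n R : Type*} [Fintype m] [Fintype n]
    [DecidableEq m] [Field R] [PartialOrder R] [StarRing R]
    {M : Matrix n n R} (hM : M.PosDef) {e : m → n} (he : Function.Injective e) :
    IsUnit (M.submatrix e e).det :=
  (isUnit_iff_isUnit_det _).mp (hM.submatrix he).isUnit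

section SecondMoments

variable {Ω ι : Type*} [MeasurableSpace Ω] [Fintype ι] {μ : Measure Ω} {y : Ω → ι → ℝ}

theorem dotProduct_mul_dotProduct (v w z : ι → ℝ) :
    (v ⬝ᵥ z) * (w ⬝ᵥ z) = ∑ k, ∑ l, v k * w l * (z k * z l) := by
  simp only [dotProduct, Finset.sum_mul_sum]
  exact Finset.sum_congr rfl fun k _ => Finset.sum_congr rfl fun l _ => by ring

theorem integrable_dotProduct_mul_dotProduct
    (hy : ∀ k l, Integrable (fun ω => y ω k * y ω l) μ) (v w : ι → ℝ) :
    Integrable (fun ω => (v ⬝ᵥ y ω) * (w ⬝ᵥ y ω)) μ := by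
  simp only [dotProduct_mul_dotProduct]
  exact integrable_finsetSum _ fun k _ => integrable_finsetSum _ fun l _ => (hy k l).const_mul _

theorem integral_dotProduct_mul_dotProduct {K : Matrix ι ι ℝ}
    (hy : ∀ k l, Integrable (fun ω => y ω k * y ω l) μ)
    (hK : ∀ k l, ∫ ω, y ω k * y ω l ∂μ = K k l) (v w : ι → ℝ) :
    ∫ ω, (v ⬝ᵥ y ω) * (w ⬝ᵥ y ω) ∂μ = v ⬝ᵥ (K *ᵥ w) := by
  simp only [dotProduct_mul_dotProduct]
  rw [integral_finsetSum _ fun k _ => integrable_finsetSum _ fun l _ => (hy k l).const_mul _]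
  simp only [integral_finsetSum _ fun l _ => (hy _ l).const_mul _, integral_const_mul, hK,
    dotProduct, mulVec, Finset.mul_sum]
  exact Finset.sum_congr rfl fun k _ => Finset.sum_congr rfl fun l _ => by ring

end SecondMoments

section GaussianScore

noncomputable def gaussianLogDensity (v x : ℝ) : ℝ :=
  -(1 / 2) * Real.log (2 * π) - (1 / 2) * Real.log v - x ^ 2 / (2 * v)

noncomputable def gaussianScore (v v' x x' : ℝ) : ℝ :=
  (x * x - v) * v' / (2 * v ^ 2) - x * x' / v

theorem hasDerivAt_gaussianLogDensity {v x : ℝ → ℝ} {v' x' θ : ℝ} (hv : HasDerivAt v v' θ)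
    (hx : HasDerivAt x x' θ) (hv0 : v θ ≠ 0) :
    HasDerivAt (fun θ => gaussianLogDensity (v θ) (x θ)) (gaussianScore (v θ) v' (x θ) x') θ := by
  have h : HasDerivAt (fun θ => gaussianLogDensity (v θ) (x θ))
      (0 - 1 / 2 * (v' / v θ) -
        ((2 : ℕ) * x θ ^ (2 - 1) * x' * (2 * v θ) - x θ ^ 2 * (2 * v')) / (2 * v θ) ^ 2) θ :=
    ((hasDerivAt_const θ _).sub ((hv.log hv0).const_mul (1 / 2))).sub
      ((hx.pow 2).div (hv.const_mul 2) (mul_ne_zero two_ne_zero hv0))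
  convert h using 1
  simp only [gaussianScore]
  field_simp
  ring

variable {Ω : Type*} [MeasurableSpace Ω] {μ : Measure Ω} {X X' : Ω → ℝ}

theorem integrable_gaussianScore [IsFiniteMeasure μ] (v v' : ℝ)
    (hXX : Integrable (fun ω => X ω * X ω) μ) (hXX' : Integrable (fun ω => X ω * X' ω) μ) :
    Integrable (fun ω => gaussianScore v v' (X ω) (X' ω)) μ :=
  (((hXX.sub (integrable_const v)).mul_const v').div_const _).sub (hXX'.div_const v)

theorem integral_gaussianScore_eq_zero [IsProbabilityMeasure μ] {v : ℝ} (v' : ℝ)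
    (hXX : Integrable (fun ω => X ω * X ω) μ) (hXX' : Integrable (fun ω => X ω * X' ω) μ)
    (hvar : ∫ ω, X ω * X ω ∂μ = v) (hcov : ∫ ω, X ω * X' ω ∂μ = 0) :
    ∫ ω, gaussianScore v v' (X ω) (X' ω) ∂μ = 0 := by
  have hcentered : Integrable (fun ω => (X ω * X ω - v) * v') μ :=
    (hXX.sub (integrable_const v)).mul_const v'
  simp only [gaussianScore]
  rw [integral_sub (hcentered.div_const _) (hXX'.div_const v), integral_div, integral_div,
    integral_mul_const, integral_sub hXX (integrable_const v), hvar, hcov]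
  simp

end GaussianScore

theorem dite_mem_dotProduct {ι R : Type*} [Fintype ι] [DecidableEq ι] [CommRing R]
    (S : Finset ι) (v : S → R) (z : ι → R) :
    (fun k => if h : k ∈ S then v ⟨k, h⟩ else 0) ⬝ᵥ z = v ⬝ᵥ fun j : S => z j := by
  simp only [dotProduct, dite_mul, zero_mul]
  rw [← Finset.sum_subset S.subset_univ fun k _ hk => dif_neg hk, ← Finset.sum_coe_sort S]
  exact Finset.sum_congr rfl fun j _ => dif_pos j.2

section VecchiaCoefficients

variable {ι R : Type*} [DecidableEq ι] [CommRing R]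

noncomputable def vecchiaResidual (K : Matrix ι ι R) (i : ι) (S : Finset ι) (z : ι → R) : R :=
  z i - (fun j : S => K i j) ⬝ᵥ ((K.submatrix (↑) (↑) : Matrix S S R)⁻¹ *ᵥ fun j : S => z j)

/-- `σ²_{i|S} = K_ii - K_iS K_SS⁻¹ K_Si`, the residual of the `i`-th column of `K`. -/
noncomputable def vecchiaCondVar (K : Matrix ι ι R) (i : ι) (S : Finset ι) : R :=
  vecchiaResidual K i S fun l => K l i

noncomputable def vecchiaCoeff (K : Matrix ι ι R) (i : ι) (S : Finset ι) : ι → R :=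
  Pi.single i 1 - fun k => if h : k ∈ S then
    ((fun j : S => K i j) ᵥ* (K.submatrix (↑) (↑) : Matrix S S R)⁻¹) ⟨k, h⟩ else 0

variable {K : Matrix ι ι R} {i : ι} {S : Finset ι}

theorem vecchiaCoeff_apply_of_notMem {k : ι} (hk : k ∉ S) :
    vecchiaCoeff K i S k = (Pi.single i 1 : ι → R) k := by
  simp [vecchiaCoeff, hk]

variable [Fintype ι]

theorem vecchiaResidual_eq_dotProduct (z : ι → R) :
    vecchiaResidual K i S z = vecchiaCoeff K i S ⬝ᵥ z := by
  rw [vecchiaResidual, vecchiaCoeff, sub_dotProduct, single_one_dotProduct, dite_mem_dotProduct,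
    dotProduct_mulVec]

theorem vecchiaCoeff_vecMul_apply_self : (vecchiaCoeff K i S ᵥ* K) i = vecchiaCondVar K i S :=
  (vecchiaResidual_eq_dotProduct _).symm

theorem vecchiaCoeff_vecMul_apply_of_mem (hS : IsUnit (K.submatrix (↑) (↑) : Matrix S S R).det)
    {j : ι} (hj : j ∈ S) : (vecchiaCoeff K i S ᵥ* K) j = 0 := by
  have hcol : (fun p : S => K p j) =
      (K.submatrix (↑) (↑) : Matrix S S R) *ᵥ Pi.single (⟨j, hj⟩ : S) 1 := by
    rw [mulVec_single_one]; rfl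
  change vecchiaCoeff K i S ⬝ᵥ (fun l => K l j) = 0
  rw [← vecchiaResidual_eq_dotProduct, vecchiaResidual, hcol, mulVec_mulVec, nonsing_inv_mul _ hS,
    one_mulVec, dotProduct_single_one, sub_self]

theorem vecchiaCoeff_dotProduct_mulVec (hS : IsUnit (K.submatrix (↑) (↑) : Matrix S S R).det)
    {b : ι → R} (hb : ∀ k, k ≠ i → k ∉ S → b k = 0) :
    vecchiaCoeff K i S ⬝ᵥ (K *ᵥ b) = vecchiaCondVar K i S * b i := by
  rw [dotProduct_mulVec, dotProduct, Finset.sum_eq_single i, vecchiaCoeff_vecMul_apply_self]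
  · intro k _ hki
    by_cases hk : k ∈ S
    · rw [vecchiaCoeff_vecMul_apply_of_mem hS hk, zero_mul]
    · rw [hb k hki hk, mul_zero]
  · exact fun h => absurd (Finset.mem_univ i) h

theorem vecchiaCoeff_dotProduct_mulVec_self
    (hS : IsUnit (K.submatrix (↑) (↑) : Matrix S S R).det) (hi : i ∉ S) :
    vecchiaCoeff K i S ⬝ᵥ (K *ᵥ vecchiaCoeff K i S) = vecchiaCondVar K i S := by
  rw [vecchiaCoeff_dotProduct_mulVec hS, vecchiaCoeff_apply_of_notMem hi, Pi.single_eq_same,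
    mul_one]
  intro k hki hk
  rw [vecchiaCoeff_apply_of_notMem hk, Pi.single_eq_of_ne hki]

end VecchiaCoefficients

theorem vecchiaCondVar_pos {ι : Type*} [Fintype ι] [DecidableEq ι] {K : Matrix ι ι ℝ}
    (hK : K.PosDef) {i : ι} {S : Finset ι} (hi : i ∉ S) : 0 < vecchiaCondVar K i S := by
  have hS := hK.isUnit_det_submatrix (Subtype.val_injective (p := (· ∈ S)))
  have ha : vecchiaCoeff K i S ≠ 0 := fun h => by
    simpa [vecchiaCoeff_apply_of_notMem hi] using congrFun h i
  simpa only [star_trivial, vecchiaCoeff_dotProduct_mulVec_self hS hi] using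
    hK.dotProduct_mulVec_pos ha

section VecchiaDerivatives

variable {ι : Type*} [DecidableEq ι] {K : ℝ → Matrix ι ι ℝ} {θ₀ : ℝ} {i : ι}
  {S : Finset ι}

theorem deriv_vecchiaCoeff_apply_of_notMem {k : ι} (hk : k ∉ S) :
    deriv (fun θ => vecchiaCoeff (K θ) i S k) θ₀ = 0 := by
  simp only [vecchiaCoeff_apply_of_notMem hk, deriv_const]

theorem differentiableAt_vecchiaCoeff_apply
    (hK : ∀ p q, DifferentiableAt ℝ (fun θ => K θ p q) θ₀)
    (hS : ((K θ₀).submatrix ((↑) : S → ι) (↑)).det ≠ 0) (k : ι) :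
    DifferentiableAt ℝ (fun θ => vecchiaCoeff (K θ) i S k) θ₀ := by
  have hinv := DifferentiableAt.matrix_inv_apply (A := fun θ => (K θ).submatrix ((↑) : S → ι) (↑))
    (fun p q => hK p q) hS
  by_cases hk : k ∈ S
  · simp only [vecchiaCoeff, Pi.sub_apply, dif_pos hk, vecMul, dotProduct]
    exact (differentiableAt_const _).sub
      (DifferentiableAt.fun_sum fun p _ => (hK i p).mul (hinv p _))
  · simp only [vecchiaCoeff_apply_of_notMem hk, differentiableAt_const]

end VecchiaDerivatives

theorem exists_hasDerivAt_vecchiaFactor_integral_eq_zero {Ω ι : Type*} [MeasurableSpace Ω]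
    {μ : Measure Ω} [IsProbabilityMeasure μ] [Fintype ι] [DecidableEq ι]
    {K : ℝ → Matrix ι ι ℝ} {θ₀ : ℝ} (hK : (K θ₀).PosDef)
    (hKd : ∀ p q, DifferentiableAt ℝ (fun θ => K θ p q) θ₀) {i : ι} {S : Finset ι} (hi : i ∉ S)
    {y : Ω → ι → ℝ} (hy : ∀ k l, Integrable (fun ω => y ω k * y ω l) μ)
    (hcov : ∀ k l, ∫ ω, y ω k * y ω l ∂μ = K θ₀ k l) :
    ∃ D : Ω → ℝ, (∀ ω, HasDerivAt (fun θ => gaussianLogDensity (vecchiaCondVar (K θ) i S)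
        (vecchiaResidual (K θ) i S (y ω))) (D ω) θ₀) ∧ Integrable D μ ∧ ∫ ω, D ω ∂μ = 0 := by
  set a := fun θ => vecchiaCoeff (K θ) i S
  set a' := fun k => deriv (fun θ => a θ k) θ₀
  have hS := hK.isUnit_det_submatrix (Subtype.val_injective (p := (· ∈ S)))
  have ha (k : ι) : HasDerivAt (fun θ => a θ k) (a' k) θ₀ :=
    (differentiableAt_vecchiaCoeff_apply hKd hS.ne_zero k).hasDerivAt
  have hσ : DifferentiableAt ℝ (fun θ => vecchiaCondVar (K θ) i S) θ₀ := by
    simp only [vecchiaCondVar, vecchiaResidual_eq_dotProduct, dotProduct]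
    exact DifferentiableAt.fun_sum fun k _ => (ha k).differentiableAt.mul (hKd k i)
  have hvar : a θ₀ ⬝ᵥ (K θ₀ *ᵥ a θ₀) = vecchiaCondVar (K θ₀) i S :=
    vecchiaCoeff_dotProduct_mulVec_self hS hi
  have hcov' : a θ₀ ⬝ᵥ (K θ₀ *ᵥ a') = 0 := by
    rw [vecchiaCoeff_dotProduct_mulVec hS]
    · exact mul_eq_zero_of_right _ (deriv_vecchiaCoeff_apply_of_notMem hi)
    · exact fun k _ hk => deriv_vecchiaCoeff_apply_of_notMem hk
  refine ⟨fun ω => gaussianScore (vecchiaCondVar (K θ₀) i S)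
    (deriv (fun θ => vecchiaCondVar (K θ) i S) θ₀) (a θ₀ ⬝ᵥ y ω) (a' ⬝ᵥ y ω), fun ω => ?_,
    integrable_gaussianScore _ _ (integrable_dotProduct_mul_dotProduct hy _ _)
      (integrable_dotProduct_mul_dotProduct hy _ _),
    integral_gaussianScore_eq_zero _ (integrable_dotProduct_mul_dotProduct hy _ _)
      (integrable_dotProduct_mul_dotProduct hy _ _)
      ((integral_dotProduct_mul_dotProduct hy hcov _ _).trans hvar)
      ((integral_dotProduct_mul_dotProduct hy hcov _ _).trans hcov')⟩
  simp only [vecchiaResidual_eq_dotProduct]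
  exact hasDerivAt_gaussianLogDensity hσ.hasDerivAt (hasDerivAt_dotProduct_const ha _)
    (vecchiaCondVar_pos hK hi).ne'

theorem vecchia_score_unbiased_general
    {Ω : Type*} [MeasurableSpace Ω] (μ : Measure Ω) [IsProbabilityMeasure μ]
    {n : ℕ} (K : ℝ → Matrix (Fin n) (Fin n) ℝ)
    (hKpd : ∀ θ, (K θ).PosDef)
    (hKdiff : ∀ i j, Differentiable ℝ (fun θ => K θ i j))
    (g : Fin n → Finset (Fin n)) (hg : ∀ i, ∀ j ∈ g i, j < i)
    (θ₀ : ℝ)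
    (y : Ω → Fin n → ℝ)
    (hint2 : ∀ i j, Integrable (fun ω => y ω i * y ω j) μ)
    (hcov : ∀ i j, ∫ ω, y ω i * y ω j ∂μ = K θ₀ i j)
    -- conditional variances and residuals of the Vecchia factors
    (σ2 : ℝ → Fin n → ℝ)
    (hσ2 : ∀ θ i, σ2 θ i = K θ i i -
      (fun j : g i => K θ i j) ⬝ᵥ ((Matrix.of fun p q : g i => K θ p q)⁻¹ *ᵥ fun j : g i => K θ j i))
    (u : ℝ → Fin n → (Fin n → ℝ) → ℝ)
    (hu : ∀ θ i z, u θ i z = z i -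
      (fun j : g i => K θ i j) ⬝ᵥ ((Matrix.of fun p q : g i => K θ p q)⁻¹ *ᵥ fun j : g i => z j))
    -- the Vecchia log-likelihood
    (ℓ : (Fin n → ℝ) → ℝ → ℝ)
    (hℓ : ∀ z θ, ℓ z θ = ∑ i : Fin n,
      (-(1 / 2) * Real.log (2 * π) - (1 / 2) * Real.log (σ2 θ i) - (u θ i z) ^ 2 / (2 * σ2 θ i))) :
    ∫ ω, deriv (fun θ => ℓ (y ω) θ) θ₀ ∂μ = 0 := by
  have hℓ' (z : Fin n → ℝ) : (fun θ => ℓ z θ) = fun θ => ∑ i : Fin n,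
      gaussianLogDensity (vecchiaCondVar (K θ) i (g i)) (vecchiaResidual (K θ) i (g i) z) :=
    funext fun θ => (hℓ z θ).trans (by simp only [hσ2, hu]; rfl)
  choose D hD hDint hDzero using fun i => exists_hasDerivAt_vecchiaFactor_integral_eq_zero
    (hKpd θ₀) (fun p q => (hKdiff p q).differentiableAt) (fun h => (hg i i h).false) hint2 hcov
  have hderiv (ω : Ω) : deriv (fun θ => ℓ (y ω) θ) θ₀ = ∑ i, D i ω := by
    rw [hℓ']
    exact (HasDerivAt.fun_sum fun i _ => hD i ω).deriv
  calc ∫ ω, deriv (fun θ => ℓ (y ω) θ) θ₀ ∂μ = ∫ ω, ∑ i, D i ω ∂μ := by simp only [hderiv]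
    _ = ∑ i, ∫ ω, D i ω ∂μ := integral_finsetSum _ fun i _ => hDint i
    _ = 0 := Finset.sum_eq_zero fun i _ => hDzero i

/-- The Vecchia score function is unbiased. For a family `θ ↦ K(θ)` of
positive-definite covariance matrices depending differentiably on a scalar parameter,
with conditioning sets `g(i) ⊆ {1,...,i-1}`, the Vecchia log-likelihood is
`ℓ̂(y;θ) = Σᵢ [-(1/2)log(2π) - (1/2)log σ²_{i|g(i)}(θ) - u_{i|g(i)}(θ,y)²/(2σ²_{i|g(i)}(θ))]`,
and `E_θ₀[∂ℓ̂(y;θ)/∂θ |_{θ=θ₀}] = 0` under `y ~ N(0, K(θ₀))` (encoded by its first and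
second moments). -/
theorem vecchia_score_unbiased
    {Ω : Type*} [MeasurableSpace Ω] (μ : Measure Ω) [IsProbabilityMeasure μ]
    {n : ℕ} (K : ℝ → Matrix (Fin n) (Fin n) ℝ)
    (hKsym : ∀ θ, (K θ).IsSymm) (hKpd : ∀ θ, (K θ).PosDef)
    (hKdiff : ∀ i j, Differentiable ℝ (fun θ => K θ i j))
    (g : Fin n → Finset (Fin n)) (hg : ∀ i, ∀ j ∈ g i, j < i)
    (θ₀ : ℝ)
    (y : Ω → Fin n → ℝ) (hy : Measurable y)
    (hint1 : ∀ i, Integrable (fun ω => y ω i) μ)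
    (hint2 : ∀ i j, Integrable (fun ω => y ω i * y ω j) μ)
    (hmean : ∀ i, ∫ ω, y ω i ∂μ = 0)
    (hcov : ∀ i j, ∫ ω, y ω i * y ω j ∂μ = K θ₀ i j)
    -- conditional variances and residuals of the Vecchia factors
    (σ2 : ℝ → Fin n → ℝ)
    (hσ2 : ∀ θ i, σ2 θ i = K θ i i -
      (fun j : g i => K θ i j) ⬝ᵥ ((Matrix.of fun p q : g i => K θ p q)⁻¹ *ᵥ fun j : g i => K θ j i))
    (u : ℝ → Fin n → (Fin n → ℝ) → ℝ)
    (hu : ∀ θ i z, u θ i z = z i -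
      (fun j : g i => K θ i j) ⬝ᵥ ((Matrix.of fun p q : g i => K θ p q)⁻¹ *ᵥ fun j : g i => z j))
    -- the Vecchia log-likelihood
    (ℓ : (Fin n → ℝ) → ℝ → ℝ)
    (hℓ : ∀ z θ, ℓ z θ = ∑ i : Fin n,
      (-(1 / 2) * Real.log (2 * π) - (1 / 2) * Real.log (σ2 θ i) - (u θ i z) ^ 2 / (2 * σ2 θ i))) :
    ∫ ω, deriv (fun θ => ℓ (y ω) θ) θ₀ ∂μ = 0 :=
  vecchia_score_unbiased_general μ K hKpd hKdiff g hg θ₀ y hint2 hcov σ2 hσ2 u hu ℓ hℓ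
end

section
/- Saddle-point/duality characterization of the shorted operator in finite dimensions: let G be a symmetric positive-definite n×n matrix with inverse L, let S ⊆ ℝ^n be a linear subspace, and let φ ∈ ℝ^n. Then inf_{ψ ∈ S} (φ + ψ)ᵀ G (φ + ψ) / 2 = sup_{u ∈ S⊥_L} ( φᵀ u - uᵀ L u / 2 ), where S⊥_L := { u ∈ ℝ^n : ψᵀ u = 0 for all ψ ∈ S } is the annihilator of S (under the Euclidean pairing). -/
/-! Completing the square gives `2 xᵀGy ≤ xᵀGx + yᵀGy`. Split `φ = s + w` with `s ∈ S` and `w`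
`G`-orthogonal to `S`. Then `ψ = -s` attains the infimum and `u = Gw`, which annihilates `S`,
attains the supremum; both values are `wᵀGw / 2`, and the inequality (with `y = w`, resp.
`x = w` and `y = Lu`) shows that neither can be improved. -/

open Matrix

namespace Matrix

variable {ι : Type*} [Fintype ι]

lemma IsSymm.dotProduct_mulVec_comm {G : Matrix ι ι ℝ} (hG : G.IsSymm) (x y : ι → ℝ) :
    x ⬝ᵥ (G *ᵥ y) = y ⬝ᵥ (G *ᵥ x) := by
  rw [dotProduct_mulVec, ← mulVec_transpose, hG.eq, dotProduct_comm]

lemma PosSemidef.two_mul_dotProduct_mulVec_le {G : Matrix ι ι ℝ} (hG : G.PosSemidef)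
    (x y : ι → ℝ) :
    2 * (x ⬝ᵥ (G *ᵥ y)) ≤ x ⬝ᵥ (G *ᵥ x) + y ⬝ᵥ (G *ᵥ y) := by
  have hsymm : y ⬝ᵥ (G *ᵥ x) = x ⬝ᵥ (G *ᵥ y) :=
    (isHermitian_iff_isSymm.mp hG.isHermitian).dotProduct_mulVec_comm y x
  have hsq := hG.dotProduct_mulVec_nonneg (x - y)
  simp only [star_trivial, mulVec_sub, dotProduct_sub, sub_dotProduct, hsymm] at hsq
  linarith

lemma PosSemidef.isLeast_half_dotProduct_mulVec_add {G : Matrix ι ι ℝ} (hG : G.PosSemidef)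
    {S : Submodule ℝ (ι → ℝ)} {φ w : ι → ℝ} (hw : φ - w ∈ S)
    (horth : ∀ ψ ∈ S, ψ ⬝ᵥ (G *ᵥ w) = 0) :
    IsLeast { r : ℝ | ∃ ψ ∈ S, r = (φ + ψ) ⬝ᵥ (G *ᵥ (φ + ψ)) / 2 } (w ⬝ᵥ (G *ᵥ w) / 2) := by
  refine ⟨⟨w - φ, by simpa using S.neg_mem hw, by rw [add_sub_cancel]⟩, ?_⟩
  rintro r ⟨ψ, hψ, rfl⟩
  have hcross : (φ + ψ) ⬝ᵥ (G *ᵥ w) = w ⬝ᵥ (G *ᵥ w) := by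
    have := horth _ (S.add_mem hw hψ)
    rw [show φ - w + ψ = (φ + ψ) - w by abel, sub_dotProduct] at this
    linarith
  have := hG.two_mul_dotProduct_mulVec_le (φ + ψ) w
  linarith

variable [DecidableEq ι]

lemma PosDef.exists_sub_mem_forall_dotProduct_mulVec_eq_zero {G : Matrix ι ι ℝ}
    (hG : G.PosDef) (S : Submodule ℝ (ι → ℝ)) (φ : ι → ℝ) :
    ∃ w, φ - w ∈ S ∧ ∀ ψ ∈ S, ψ ⬝ᵥ (G *ᵥ w) = 0 := by
  have hrefl : G.toBilin'.IsRefl :=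
    (isSymm_toBilin'_iff_isSymm.mpr (isHermitian_iff_isSymm.mp hG.isHermitian)).isRefl
  have hdisj : Disjoint S (G.toBilin'.orthogonal S) := by
    rw [Submodule.disjoint_def]
    intro x hxS hxO
    by_contra hx
    have hxx : x ⬝ᵥ (G *ᵥ x) = 0 := by
      simpa [toBilin'_apply'] using LinearMap.BilinForm.mem_orthogonal_iff.mp hxO x hxS
    simpa [hxx] using hG.dotProduct_mulVec_pos hx
  have hcompl := (LinearMap.BilinForm.isCompl_orthogonal_iff_disjoint hrefl).mpr hdisj
  obtain ⟨s, hs, w, hw, rfl⟩ :=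
    Submodule.mem_sup.mp (hcompl.sup_eq_top ▸ Submodule.mem_top (x := φ))
  refine ⟨w, by simpa using hs, fun ψ hψ => ?_⟩
  simpa [toBilin'_apply'] using LinearMap.BilinForm.mem_orthogonal_iff.mp hw ψ hψ

lemma PosDef.isGreatest_dotProduct_sub_half_dotProduct_inv_mulVec {G L : Matrix ι ι ℝ}
    (hG : G.PosDef) (hL : L = G⁻¹) {S : Submodule ℝ (ι → ℝ)} {φ w : ι → ℝ} (hw : φ - w ∈ S)
    (horth : ∀ ψ ∈ S, ψ ⬝ᵥ (G *ᵥ w) = 0) :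
    IsGreatest { r : ℝ | ∃ u : ι → ℝ, (∀ ψ ∈ S, ψ ⬝ᵥ u = 0) ∧
        r = φ ⬝ᵥ u - u ⬝ᵥ (L *ᵥ u) / 2 } (w ⬝ᵥ (G *ᵥ w) / 2) := by
  have hdet : IsUnit G.det := (isUnit_iff_isUnit_det G).mp hG.isUnit
  have hGL : G * L = 1 := hL ▸ mul_nonsing_inv G hdet
  have hLG : L * G = 1 := hL ▸ nonsing_inv_mul G hdet
  have hpair : ∀ u, (∀ ψ ∈ S, ψ ⬝ᵥ u = 0) → φ ⬝ᵥ u = w ⬝ᵥ u := fun u hu => by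
    simpa [sub_dotProduct, sub_eq_zero] using hu _ hw
  refine ⟨⟨G *ᵥ w, horth, ?_⟩, ?_⟩
  · rw [hpair _ horth, mulVec_mulVec, hLG, one_mulVec, dotProduct_comm (G *ᵥ w)]
    ring
  · rintro r ⟨u, hu, rfl⟩
    obtain ⟨y, rfl⟩ : ∃ y, G *ᵥ y = u := ⟨L *ᵥ u, by rw [mulVec_mulVec, hGL, one_mulVec]⟩
    rw [hpair _ hu, mulVec_mulVec, hLG, one_mulVec, dotProduct_comm (G *ᵥ y)]
    have := hG.posSemidef.two_mul_dotProduct_mulVec_le w y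
    linarith

end Matrix

theorem shorted_operator_duality_general
    {n : ℕ} (G : Matrix (Fin n) (Fin n) ℝ) (hGpd : G.PosDef)
    (L : Matrix (Fin n) (Fin n) ℝ) (hL : L = G⁻¹)
    (S : Submodule ℝ (Fin n → ℝ)) (φ : Fin n → ℝ) :
    sInf { r : ℝ | ∃ ψ ∈ S, r = (φ + ψ) ⬝ᵥ (G *ᵥ (φ + ψ)) / 2 }
      = sSup { r : ℝ | ∃ u : Fin n → ℝ, (∀ ψ ∈ S, ψ ⬝ᵥ u = 0) ∧
          r = φ ⬝ᵥ u - u ⬝ᵥ (L *ᵥ u) / 2 } := by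
  obtain ⟨w, hw, horth⟩ := hGpd.exists_sub_mem_forall_dotProduct_mulVec_eq_zero S φ
  rw [(hGpd.posSemidef.isLeast_half_dotProduct_mulVec_add hw horth).csInf_eq,
    (hGpd.isGreatest_dotProduct_sub_half_dotProduct_inv_mulVec hL hw horth).csSup_eq]

/-- Saddle-point/duality characterization of the shorted operator in finite
dimensions. For `G` symmetric positive definite with inverse `L`, a subspace `S ⊆ ℝⁿ` and
`φ ∈ ℝⁿ`:
`inf_{ψ ∈ S} (φ+ψ)ᵀ G (φ+ψ)/2 = sup_{u ∈ S⊥} (φᵀu - uᵀ L u / 2)`,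
where `S⊥ = {u : ψᵀu = 0 ∀ ψ ∈ S}` is the annihilator of `S` under the Euclidean pairing. -/
theorem shorted_operator_duality
    {n : ℕ} (G : Matrix (Fin n) (Fin n) ℝ) (hGsym : G.IsSymm) (hGpd : G.PosDef)
    (L : Matrix (Fin n) (Fin n) ℝ) (hL : L = G⁻¹)
    (S : Submodule ℝ (Fin n → ℝ)) (φ : Fin n → ℝ) :
    sInf { r : ℝ | ∃ ψ ∈ S, r = (φ + ψ) ⬝ᵥ (G *ᵥ (φ + ψ)) / 2 }
      = sSup { r : ℝ | ∃ u : Fin n → ℝ, (∀ ψ ∈ S, ψ ⬝ᵥ u = 0) ∧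
          r = φ ⬝ᵥ u - u ⬝ᵥ (L *ᵥ u) / 2 } :=
  shorted_operator_duality_general G hGpd L hL S φ
end
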